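/- Let A ∈ ℝ^{n×n} be Schur stable, B ∈ ℝ^{n×m}, and suppose Σ = (1/2π)∫_{-π}^π G(e^{iθ}) Φ(e^{iθ}) G(e^{iθ})* dθ for some integrable Hermitian matrix-valued function Φ on the circle, where G(z) = z(zI−A)^{-1}B. Then there exists H ∈ ℂ^{m×n} such that Σ − AΣA' = BH + H*B'. -/

import Mathlib

/-!
Fix θ, put z = e^{iθ} and W = G(z) Φ G(z)ᴴ. Since ‖z‖ = 1 lies outside the spectrum of A,
(zI - A) G(z) = z B, and a direct computation shows that
Y = ½ (W + z W Aᴴ - z̄ A W - A W Aᴴ) equals B · ½ Φ G(z)ᴴ (1 + z Aᴴ), while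
Y + Yᴴ = W - A W Aᴴ because W is Hermitian. Integrating over the circle, Z = ∫ Y satisfies
Z + Zᴴ = T - A T Aᴴ for T = ∫ W, and Z still lies in the column space of B: if B L B = B then
B L Y = Y pointwise, hence B L Z = Z. So H = L Z / 2π works.
-/

open Matrix Real

noncomputable def Gfil {n m : ℕ} (A : Matrix (Fin n) (Fin n) ℝ)
    (B : Matrix (Fin n) (Fin m) ℝ) (z : ℂ) : Matrix (Fin n) (Fin m) ℂ :=
  z • (z • (1 : Matrix (Fin n) (Fin n) ℂ) - A.map Complex.ofReal)⁻¹ * B.map Complex.ofReal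

open MeasureTheory

theorem Matrix.exists_mul_mul_eq_self {K m n : Type*} [Field K] [Fintype m] [Fintype n]
    [DecidableEq m] [DecidableEq n] (B : Matrix m n K) : ∃ L : Matrix n m K, B * L * B = B := by
  set f := toLin' B
  obtain ⟨t, ht⟩ := (LinearMap.range f).subtype.exists_leftInverse_of_injective
    (Submodule.ker_subtype _)
  obtain ⟨s, hs⟩ := f.rangeRestrict.exists_rightInverse_of_surjective f.range_rangeRestrict
  refine ⟨LinearMap.toMatrix' (s ∘ₗ t), toLin'.injective (LinearMap.ext fun x => ?_)⟩
  have hfs : ∀ y, f (s y) = y := fun y => congrArg Subtype.val (LinearMap.congr_fun hs y)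
  have htf : t (f x) = f.rangeRestrict x := LinearMap.congr_fun ht (f.rangeRestrict x)
  calc toLin' (B * LinearMap.toMatrix' (s ∘ₗ t) * B) x = f (s (t (f x))) := by
        simp [toLin'_mul, f]
    _ = f x := by rw [htf, hfs]; rfl

section EntrywiseIntegral

variable {𝕜 l m n p : Type*} [RCLike 𝕜] {μ : Measure ℝ} {a b : ℝ}

def EntrywiseIntervalIntegrable (F : ℝ → Matrix m n 𝕜) (μ : Measure ℝ) (a b : ℝ) :
    Prop :=
  ∀ i j, IntervalIntegrable (fun t => F t i j) μ a b

noncomputable def entrywiseIntervalIntegral (F : ℝ → Matrix m n 𝕜) (μ : Measure ℝ)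
    (a b : ℝ) : Matrix m n 𝕜 :=
  Matrix.of fun i j => ∫ t in a..b, F t i j ∂μ

namespace EntrywiseIntervalIntegrable

variable {F F' : ℝ → Matrix m n 𝕜}

theorem add (hF : EntrywiseIntervalIntegrable F μ a b)
    (hF' : EntrywiseIntervalIntegrable F' μ a b) :
    EntrywiseIntervalIntegrable (fun t => F t + F' t) μ a b :=
  fun i j => (hF i j).add (hF' i j)

theorem sub (hF : EntrywiseIntervalIntegrable F μ a b)
    (hF' : EntrywiseIntervalIntegrable F' μ a b) :
    EntrywiseIntervalIntegrable (fun t => F t - F' t) μ a b :=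
  fun i j => (hF i j).sub (hF' i j)

theorem continuousOn_smul [IsLocallyFiniteMeasure μ] (hF : EntrywiseIntervalIntegrable F μ a b)
    {g : ℝ → 𝕜} (hg : ContinuousOn g (Set.uIcc a b)) :
    EntrywiseIntervalIntegrable (fun t => g t • F t) μ a b :=
  fun i j => (hF i j).continuousOn_mul hg

theorem const_mul [Fintype m] (hF : EntrywiseIntervalIntegrable F μ a b) (C : Matrix l m 𝕜) :
    EntrywiseIntervalIntegrable (fun t => C * F t) μ a b := fun i j => by
  simpa only [mul_apply, Finset.sum_fn] using
    IntervalIntegrable.sum Finset.univ fun k _ => (hF k j).const_mul (C i k)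

theorem mul_const [Fintype n] (hF : EntrywiseIntervalIntegrable F μ a b) (D : Matrix n p 𝕜) :
    EntrywiseIntervalIntegrable (fun t => F t * D) μ a b := fun i j => by
  simpa only [mul_apply, Finset.sum_fn] using
    IntervalIntegrable.sum Finset.univ fun k _ => (hF i k).mul_const (D k j)

end EntrywiseIntervalIntegrable

variable {F F' : ℝ → Matrix m n 𝕜}

theorem entrywiseIntervalIntegral_sub (hF : EntrywiseIntervalIntegrable F μ a b)
    (hF' : EntrywiseIntervalIntegrable F' μ a b) :
    entrywiseIntervalIntegral (fun t => F t - F' t) μ a b =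
      entrywiseIntervalIntegral F μ a b - entrywiseIntervalIntegral F' μ a b :=
  Matrix.ext fun i j => intervalIntegral.integral_sub (hF i j) (hF' i j)

theorem entrywiseIntervalIntegral_const_mul [Fintype m]
    (hF : EntrywiseIntervalIntegrable F μ a b) (C : Matrix l m 𝕜) :
    entrywiseIntervalIntegral (fun t => C * F t) μ a b = C * entrywiseIntervalIntegral F μ a b :=
  Matrix.ext fun i j => by
    simp only [entrywiseIntervalIntegral, of_apply, mul_apply]
    rw [intervalIntegral.integral_finsetSum fun k _ => (hF k j).const_mul (C i k)]
    simp_rw [intervalIntegral.integral_const_mul]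

theorem entrywiseIntervalIntegral_mul_const [Fintype n]
    (hF : EntrywiseIntervalIntegrable F μ a b) (D : Matrix n p 𝕜) :
    entrywiseIntervalIntegral (fun t => F t * D) μ a b = entrywiseIntervalIntegral F μ a b * D :=
  Matrix.ext fun i j => by
    simp only [entrywiseIntervalIntegral, of_apply, mul_apply]
    rw [intervalIntegral.integral_finsetSum fun k _ => (hF i k).mul_const (D k j)]
    simp_rw [intervalIntegral.integral_mul_const]

theorem conjTranspose_entrywiseIntervalIntegral (F : ℝ → Matrix m n 𝕜) :
    (entrywiseIntervalIntegral F μ a b)ᴴ =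
      entrywiseIntervalIntegral (fun t => (F t)ᴴ) μ a b :=
  Matrix.ext fun _ _ => intervalIntegral.intervalIntegral_conj.symm

end EntrywiseIntegral

section SteinHalf

variable {𝕜 m n : Type*} [RCLike 𝕜] [Fintype n]

/-- For `‖z‖ = 1` this is `½ (1 - z̄ A) W (1 + z Aᴴ)`. -/
noncomputable def steinHalf (A W : Matrix n n 𝕜) (z : 𝕜) : Matrix n n 𝕜 :=
  (2 : 𝕜)⁻¹ • (W + z • (W * Aᴴ) - star z • (A * W) - A * W * Aᴴ)

theorem conjTranspose_steinHalf {A W : Matrix n n 𝕜} (hW : Wᴴ = W) (z : 𝕜) :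
    (steinHalf A W z)ᴴ = W - A * W * Aᴴ - steinHalf A W z := by
  simp only [steinHalf, conjTranspose_smul, conjTranspose_sub, conjTranspose_add,
    conjTranspose_mul, conjTranspose_conjTranspose, hW, star_star, Matrix.mul_assoc,
    star_inv₀, star_ofNat]
  module

theorem steinHalf_eq_mul [Fintype m] [DecidableEq n] {A : Matrix n n 𝕜} {B G : Matrix n m 𝕜}
    (Φ : Matrix m m 𝕜) {z : 𝕜} (hz : star z * z = 1) (hG : (z • 1 - A) * G = z • B) :
    steinHalf A (G * Φ * Gᴴ) z = B * ((2 : 𝕜)⁻¹ • (Φ * Gᴴ * (1 + z • Aᴴ))) := by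
  have hB : B = G - star z • (A * G) := by
    rw [← one_smul 𝕜 B, ← hz, ← smul_smul, ← hG, Matrix.sub_mul, Matrix.smul_mul,
      Matrix.one_mul, smul_sub, smul_smul, hz, one_smul]
  rw [hB, steinHalf]
  simp only [Matrix.mul_add, Matrix.sub_mul, Matrix.smul_mul, Matrix.mul_smul, Matrix.mul_one,
    Matrix.mul_assoc, smul_smul, smul_add, smul_sub]
  linear_combination (norm := module)
    hz • ((2 : 𝕜)⁻¹ • (A * (G * (Φ * (Gᴴ * Aᴴ))) : Matrix n n 𝕜))

theorem EntrywiseIntervalIntegrable.steinHalf {μ : Measure ℝ} [IsLocallyFiniteMeasure μ]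
    {a b : ℝ} {W : ℝ → Matrix n n 𝕜} (hW : EntrywiseIntervalIntegrable W μ a b) {z : ℝ → 𝕜}
    (hz : ContinuousOn z (Set.uIcc a b)) (A : Matrix n n 𝕜) :
    EntrywiseIntervalIntegrable (fun t => steinHalf A (W t) (z t)) μ a b := by
  have hWA := hW.mul_const Aᴴ
  have hAW := hW.const_mul A
  exact ((((hW.add (hWA.continuousOn_smul hz)).sub
    (hAW.continuousOn_smul (continuous_star.comp_continuousOn hz))).sub
    (hAW.mul_const Aᴴ)).continuousOn_smul continuousOn_const)

theorem exists_stein_eq_mul_add_conjTranspose {μ : Measure ℝ} [IsLocallyFiniteMeasure μ]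
    {a b : ℝ} [Fintype m] [DecidableEq m] [DecidableEq n] {A : Matrix n n 𝕜}
    {B : Matrix n m 𝕜} {W : ℝ → Matrix n n 𝕜} {z : ℝ → 𝕜}
    (hW : EntrywiseIntervalIntegrable W μ a b) (hWherm : ∀ t, (W t)ᴴ = W t)
    (hz : ContinuousOn z (Set.uIcc a b))
    (hrange : ∀ t, ∃ P : Matrix m n 𝕜, steinHalf A (W t) (z t) = B * P) :
    ∃ H : Matrix m n 𝕜,
      entrywiseIntervalIntegral W μ a b - A * entrywiseIntervalIntegral W μ a b * Aᴴ =
        B * H + Hᴴ * Bᴴ := by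
  set T := entrywiseIntervalIntegral W μ a b
  set Y := fun t => steinHalf A (W t) (z t)
  obtain ⟨L, hL⟩ := B.exists_mul_mul_eq_self
  have hBLY : ∀ t, B * L * Y t = Y t := fun t => by
    obtain ⟨P, hP⟩ := hrange t
    simp only [Y, hP, ← Matrix.mul_assoc, hL]
  have hY : EntrywiseIntervalIntegrable Y μ a b := hW.steinHalf hz A
  have hWA : EntrywiseIntervalIntegrable (fun t => A * W t * Aᴴ) μ a b :=
    (hW.const_mul A).mul_const Aᴴ
  set Z := entrywiseIntervalIntegral Y μ a b
  have hZ : B * (L * Z) = Z := by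
    rw [← Matrix.mul_assoc, ← entrywiseIntervalIntegral_const_mul hY]
    simp only [hBLY, Z]
  have hZH : Zᴴ = T - A * T * Aᴴ - Z := by
    rw [conjTranspose_entrywiseIntervalIntegral]
    simp only [Y, conjTranspose_steinHalf (hWherm _)]
    rw [entrywiseIntervalIntegral_sub (hW.sub hWA) hY, entrywiseIntervalIntegral_sub hW hWA,
      entrywiseIntervalIntegral_mul_const (hW.const_mul A), entrywiseIntervalIntegral_const_mul hW]
  refine ⟨L * Z, ?_⟩
  rw [← conjTranspose_mul, hZ, hZH]
  abel

end SteinHalf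

theorem conjTranspose_map_ofReal {m n : Type*} (M : Matrix m n ℝ) :
    (M.map Complex.ofReal)ᴴ = (M.map Complex.ofReal)ᵀ := by
  ext
  simp

theorem smul_one_sub_mul_Gfil {n m : ℕ} (A : Matrix (Fin n) (Fin n) ℝ)
    (B : Matrix (Fin n) (Fin m) ℝ) {z : ℂ} (hz : z ∉ spectrum ℂ (A.map Complex.ofReal)) :
    (z • 1 - A.map Complex.ofReal) * Gfil A B z = z • B.map Complex.ofReal := by
  have hN : IsUnit (z • 1 - A.map Complex.ofReal).det := by
    rw [← isUnit_iff_isUnit_det, ← Algebra.algebraMap_eq_smul_one]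
    exact spectrum.notMem_iff.mp hz
  rw [Gfil, ← Matrix.mul_assoc, Matrix.mul_smul, mul_nonsing_inv _ hN, Matrix.smul_mul,
    Matrix.one_mul]

theorem star_exp_mul_I_mul_self (θ : ℝ) :
    star (Complex.exp (θ * Complex.I)) * Complex.exp (θ * Complex.I) = 1 := by
  rw [Complex.star_def, Complex.conj_mul', Complex.norm_exp_ofReal_mul_I]
  simp
theorem state_covariance_structure (n m : ℕ)
    (A : Matrix (Fin n) (Fin n) ℝ) (B : Matrix (Fin n) (Fin m) ℝ)
    (hA : ∀ μ ∈ spectrum ℂ (A.map (Complex.ofReal)), ‖μ‖ < 1)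
    (Φ : ℝ → Matrix (Fin m) (Fin m) ℂ)
    (hΦherm : ∀ θ, (Φ θ).IsHermitian)
    (hΦint : ∀ i j, IntervalIntegrable
      (fun θ => (Gfil A B (Complex.exp (θ * Complex.I)) * Φ θ *
        (Gfil A B (Complex.exp (θ * Complex.I)))ᴴ) i j)
      MeasureTheory.volume (-π) π)
    (S : Matrix (Fin n) (Fin n) ℂ)
    (hS : ∀ i j, S i j =
      (1 / (2 * π)) * ∫ θ in (-π)..π,
        (Gfil A B (Complex.exp (θ * Complex.I)) * Φ θ *
          (Gfil A B (Complex.exp (θ * Complex.I)))ᴴ) i j) :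
    ∃ H : Matrix (Fin m) (Fin n) ℂ,
      S - A.map Complex.ofReal * S * (A.map Complex.ofReal)ᵀ =
        B.map Complex.ofReal * H + Hᴴ * (B.map Complex.ofReal)ᵀ := by
  set e : ℝ → ℂ := fun θ => Complex.exp (θ * Complex.I)
  have he : ∀ θ, star (e θ) * e θ = 1 := star_exp_mul_I_mul_self
  have hresolvent : ∀ θ, (e θ • 1 - A.map Complex.ofReal) * Gfil A B (e θ) =
      e θ • B.map Complex.ofReal := fun θ =>
    smul_one_sub_mul_Gfil A B fun hmem => by
      simpa [e, Complex.norm_exp_ofReal_mul_I] using hA _ hmem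
  obtain ⟨H, hH⟩ := exists_stein_eq_mul_add_conjTranspose hΦint
    (fun θ => by simp [Matrix.mul_assoc, (hΦherm θ).eq])
    (by fun_prop : Continuous e).continuousOn
    fun θ => ⟨_, steinHalf_eq_mul (Φ θ) (he θ) (hresolvent θ)⟩
  have hS' : S = (2 * π)⁻¹ • entrywiseIntervalIntegral
      (fun θ => Gfil A B (e θ) * Φ θ * (Gfil A B (e θ))ᴴ) volume (-π) π := by
    ext i j
    rw [hS]
    simp [entrywiseIntervalIntegral, e]
  refine ⟨(2 * π)⁻¹ • H, ?_⟩
  rw [← conjTranspose_map_ofReal, ← conjTranspose_map_ofReal, hS', Matrix.mul_smul,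
    Matrix.smul_mul, ← smul_sub, hH, conjTranspose_smul, star_trivial, Matrix.mul_smul,
    Matrix.smul_mul, smul_add]
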